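/- arXiv:1506.01295 — 3 statements merged into one kernel-verified Lean document; each statement's English description precedes it below -/
import Mathlib

section
/- Consider global holomorphic super vector fields on the split (1|1)-supermanifold over ℙ¹ associated to the line bundle of degree −k. In the standard coordinate z on the chart U₀, a vector field (a(z) + b(z)θ)∂/∂z + (c(z) + d(z)θ)∂/∂θ extends to a global field iff a is a polynomial of degree ≤ 2 with d(z) = β + k·a₂z (where a₂ is the leading coefficient of a and β ∈ ℂ), c is a polynomial of degree ≤ k, and b is a polynomial of degree ≤ 2−k (with the convention that a polynomial of negative maximal degree is 0). -/
/-!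
Under `w = 1/z`, `η = z^{-k}θ` the coefficients of `∂/∂w`, `η ∂/∂w`, `∂/∂η` are, up to sign,
`w ^ n * f (1/w)` for `(f, n) = (a, 2), (b, 2 - k), (c, k)`. An entire `f` for which
`w ^ n * f (1/w)` extends over `w = 0` is a polynomial of degree `≤ n`: for `n = 0` this is
Liouville's theorem, and the difference quotient `(f z - f 0) / z` lowers the weight by one;
for `n < 0` the constant `f` must vanish by continuity at `w = 0`. The coefficient of `η ∂/∂η` is
`d (1/w) - k w a (1/w)`, whose only possible pole `k a₂ / w` has to be cancelled by `d`.
-/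

open Polynomial Filter Topology

lemma Polynomial.eval_eq_of_degree_le_two {R : Type*} [Semiring R] {p : R[X]}
    (hp : p.degree ≤ 2) (x : R) :
    p.eval x = p.coeff 0 + p.coeff 1 * x + p.coeff 2 * x ^ 2 := by
  have : p.natDegree < 3 := Nat.lt_succ_of_le (natDegree_le_iff_degree_le.2 hp)
  simp [eval_eq_sum_range' this, Finset.sum_range_succ]

/-- `f` is a section of `𝒪(n)` over the `z`-chart of `ℙ¹` that extends over `z = ∞`. -/
def ExtendsAtInfinity (n : ℤ) (f : ℂ → ℂ) : Prop :=
  ∃ F : ℂ → ℂ, Differentiable ℂ F ∧ ∀ w : ℂ, w ≠ 0 → F w = w ^ n * f w⁻¹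

lemma extendsAtInfinity_iff_neg {n : ℤ} {f : ℂ → ℂ} :
    (∃ F : ℂ → ℂ, Differentiable ℂ F ∧ ∀ w : ℂ, w ≠ 0 → F w = -(w ^ n) * f w⁻¹) ↔
      ExtendsAtInfinity n f := by
  constructor <;> rintro ⟨F, hF, hFe⟩ <;>
    exact ⟨-F, hF.neg, fun w hw => by simp [hFe w hw]⟩

namespace ExtendsAtInfinity

variable {f : ℂ → ℂ}

lemma mono {m n : ℤ} (h : ExtendsAtInfinity m f) (hmn : m ≤ n) : ExtendsAtInfinity n f := by
  obtain ⟨F, hF, hFe⟩ := h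
  refine ⟨fun w => w ^ (n - m).toNat * F w, (differentiable_pow _).mul hF, fun w hw => ?_⟩
  dsimp only
  rw [hFe w hw, ← mul_assoc, ← zpow_natCast, Int.toNat_of_nonneg (by omega), ← zpow_add₀ hw,
    sub_add_cancel]

lemma dslope_zero {n : ℕ} (h : ExtendsAtInfinity (n + 1 : ℕ) f) :
    ExtendsAtInfinity n (dslope f 0) := by
  obtain ⟨F, hF, hFe⟩ := h
  refine ⟨fun w => F w - f 0 * w ^ (n + 1),
    hF.sub ((differentiable_const _).mul (differentiable_pow _)), fun w hw => ?_⟩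
  dsimp only
  rw [dslope_of_ne _ (inv_ne_zero hw), slope_def_field, hFe w hw]
  simp only [zpow_natCast]
  field_simp
  ring

end ExtendsAtInfinity

lemma extendsAtInfinity_zero_iff {f : ℂ → ℂ} (hf : Differentiable ℂ f) :
    ExtendsAtInfinity 0 f ↔ ∃ β : ℂ, ∀ z, f z = β := by
  constructor
  · rintro ⟨F, hF, hFe⟩
    have hlim : Tendsto f (cocompact ℂ) (𝓝 (F 0)) := by
      have hinv : Tendsto (fun z : ℂ => z⁻¹) (cocompact ℂ) (𝓝 0) := by
        rw [← Metric.cobounded_eq_cocompact]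
        exact tendsto_inv₀_cobounded
      refine ((hF.continuous.tendsto 0).comp hinv).congr' ?_
      filter_upwards [isCompact_singleton.compl_mem_cocompact] with z (hz : z ≠ 0)
      simp [hFe z⁻¹ (inv_ne_zero hz)]
    exact ⟨F 0, congrFun (hf.eq_const_of_tendsto_cocompact hlim)⟩
  · rintro ⟨β, hβ⟩
    exact ⟨fun _ => β, differentiable_const _, fun w _ => by simp [hβ]⟩

lemma ExtendsAtInfinity.eq_zero_of_neg {n : ℤ} {f : ℂ → ℂ} (hf : Differentiable ℂ f)
    (h : ExtendsAtInfinity n f) (hn : n < 0) (z : ℂ) : f z = 0 := by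
  obtain ⟨F, hF, hFe⟩ := h.mono (show n ≤ -1 by omega)
  obtain ⟨β, hβ⟩ := (extendsAtInfinity_zero_iff hf).1 (h.mono hn.le)
  have hmul : (fun w => w * F w) = fun _ => β :=
    Continuous.ext_on (dense_compl_singleton 0) (continuous_id.mul hF.continuous)
      continuous_const fun w (hw : w ≠ 0) => by simp [hFe w hw, hβ, hw]
  simpa [hβ] using (congrFun hmul 0).symm

lemma ExtendsAtInfinity.exists_polynomial_natDegree_le (n : ℕ) {f : ℂ → ℂ}
    (hf : Differentiable ℂ f) (h : ExtendsAtInfinity n f) :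
    ∃ p : ℂ[X], (∀ z, f z = p.eval z) ∧ p.natDegree ≤ n := by
  induction n generalizing f with
  | zero =>
    obtain ⟨β, hβ⟩ := (extendsAtInfinity_zero_iff hf).1 h
    exact ⟨C β, by simpa using hβ, by simp⟩
  | succ n ih =>
    have hg : Differentiable ℂ (dslope f 0) := by
      simpa [differentiableOn_univ] using
        (Complex.differentiableOn_dslope (s := Set.univ) Filter.univ_mem).2 hf.differentiableOn
    obtain ⟨q, hq, hqn⟩ := ih hg h.dslope_zero
    refine ⟨C (f 0) + X * q, fun z => ?_, ?_⟩
    · simpa [← hq, sub_eq_iff_eq_add'] using (sub_smul_dslope f 0 z).symm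
    · rw [natDegree_C_add]
      exact natDegree_mul_le.trans (by rw [natDegree_X]; omega)

lemma ExtendsAtInfinity.exists_polynomial {n : ℤ} {f : ℂ → ℂ} (hf : Differentiable ℂ f)
    (h : ExtendsAtInfinity n f) :
    ∃ p : ℂ[X], (∀ z, f z = p.eval z) ∧ ∀ j : ℕ, n < j → p.coeff j = 0 := by
  rcases lt_or_ge n 0 with hn | hn
  · exact ⟨0, by simpa using h.eq_zero_of_neg hf hn, by simp⟩
  · lift n to ℕ using hn
    obtain ⟨p, hp, hpn⟩ := h.exists_polynomial_natDegree_le n hf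
    exact ⟨p, hp, fun j hj => coeff_eq_zero_of_natDegree_lt (hpn.trans_lt (by exact_mod_cast hj))⟩

lemma extendsAtInfinity_eval {n : ℤ} {p : ℂ[X]} (hp : ∀ j : ℕ, n < j → p.coeff j = 0) :
    ExtendsAtInfinity n (fun z => p.eval z) := by
  refine ⟨fun w => ∑ j ∈ p.support, p.coeff j * w ^ (n - j).toNat,
    Differentiable.fun_sum fun j _ => (differentiable_const _).mul (differentiable_pow _),
    fun w hw => ?_⟩
  dsimp only
  rw [eval_eq_sum, Polynomial.sum_def, Finset.mul_sum]
  refine Finset.sum_congr rfl fun j hj => ?_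
  have hjn : (j : ℤ) ≤ n := not_lt.1 fun hlt => mem_support_iff.1 hj (hp j hlt)
  rw [← zpow_natCast w, Int.toNat_of_nonneg (by omega), zpow_sub₀ hw, zpow_natCast, inv_pow]
  ring

lemma extendsAtInfinity_iff_exists_polynomial {n : ℤ} {f : ℂ → ℂ} (hf : Differentiable ℂ f) :
    ExtendsAtInfinity n f ↔
      ∃ p : ℂ[X], (∀ z, f z = p.eval z) ∧ ∀ j : ℕ, n < j → p.coeff j = 0 := by
  refine ⟨fun h => h.exists_polynomial hf, ?_⟩
  rintro ⟨p, hfp, hp⟩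
  rw [funext hfp]
  exact extendsAtInfinity_eval hp

lemma exists_extension_sub_mul_iff {k : ℂ} {a d : ℂ → ℂ} {p : ℂ[X]} (hap : ∀ z, a z = p.eval z)
    (hp : p.degree ≤ 2) :
    (∃ D : ℂ → ℂ, Differentiable ℂ D ∧ ∀ w : ℂ, w ≠ 0 → D w = d w⁻¹ - k * w * a w⁻¹) ↔
      ExtendsAtInfinity 0 (fun z => d z - k * p.coeff 2 * z) := by
  have hsplit : ∀ w : ℂ, w ≠ 0 → d w⁻¹ - k * w * a w⁻¹ =
      w ^ (0 : ℤ) * (d w⁻¹ - k * p.coeff 2 * w⁻¹) - (k * p.coeff 0 * w + k * p.coeff 1) := by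
    intro w hw
    rw [hap, Polynomial.eval_eq_of_degree_le_two hp]
    field_simp
    ring
  constructor
  · rintro ⟨D, hD, hDe⟩
    exact ⟨fun w => D w + (k * p.coeff 0 * w + k * p.coeff 1), by fun_prop,
      fun w hw => by simp only [hDe w hw, hsplit w hw]; ring⟩
  · rintro ⟨E, hE, hEe⟩
    exact ⟨fun w => E w - (k * p.coeff 0 * w + k * p.coeff 1), by fun_prop,
      fun w hw => by simp only [hEe w hw, hsplit w hw]⟩

/-- a super vector field `(a(z)+b(z)θ)∂/∂z + (c(z)+d(z)θ)∂/∂θ`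
on the `z`-chart of the split `(1|1)`-supermanifold over `ℙ¹` associated to the
line bundle of degree `−k` (transition `w = 1/z`, `η = z^{−k}θ`) extends to a
global holomorphic super vector field iff `a` is a polynomial of degree `≤ 2`,
`d(z) = β + k·a₂·z` with `a₂` the `z²`-coefficient of `a`, `c` is a polynomial
of degree `≤ k` and `b` a polynomial of degree `≤ 2−k` (a polynomial of
negative maximal degree being `0`). -/
theorem stmt_12 (k : ℤ) (a b c d : ℂ → ℂ)
    (ha : Differentiable ℂ a) (hb : Differentiable ℂ b)
    (hc : Differentiable ℂ c) (hd : Differentiable ℂ d) :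
    ((∃ A : ℂ → ℂ, Differentiable ℂ A ∧
        ∀ w : ℂ, w ≠ 0 → A w = -(w ^ 2) * a w⁻¹) ∧
     (∃ B : ℂ → ℂ, Differentiable ℂ B ∧
        ∀ w : ℂ, w ≠ 0 → B w = -(w ^ ((2 : ℤ) - k)) * b w⁻¹) ∧
     (∃ C : ℂ → ℂ, Differentiable ℂ C ∧
        ∀ w : ℂ, w ≠ 0 → C w = w ^ k * c w⁻¹) ∧
     (∃ D : ℂ → ℂ, Differentiable ℂ D ∧
        ∀ w : ℂ, w ≠ 0 → D w = d w⁻¹ - (k : ℂ) * w * a w⁻¹))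
    ↔
    ∃ pa pb pc : Polynomial ℂ, ∃ β : ℂ,
      (∀ z, a z = pa.eval z) ∧ pa.degree ≤ 2 ∧
      (∀ z, b z = pb.eval z) ∧ (∀ j : ℕ, (2 : ℤ) - k < (j : ℤ) → pb.coeff j = 0) ∧
      (∀ z, c z = pc.eval z) ∧ (∀ j : ℕ, k < (j : ℤ) → pc.coeff j = 0) ∧
      (∀ z, d z = β + (k : ℂ) * pa.coeff 2 * z) := by
  have hA_iff : (∃ A : ℂ → ℂ, Differentiable ℂ A ∧ ∀ w : ℂ, w ≠ 0 → A w = -(w ^ 2) * a w⁻¹) ↔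
      ExtendsAtInfinity 2 a := by
    simpa only [zpow_ofNat] using extendsAtInfinity_iff_neg (n := 2) (f := a)
  have hdeg (p : ℂ[X]) : p.degree ≤ 2 ↔ ∀ j : ℕ, (2 : ℤ) < j → p.coeff j = 0 := by
    rw [degree_le_iff_coeff_zero]
    norm_cast
  constructor
  · rintro ⟨hA, hB, hC, hD⟩
    obtain ⟨pa, hpa, hpa2⟩ := (extendsAtInfinity_iff_exists_polynomial ha).1 (hA_iff.1 hA)
    obtain ⟨pb, hpb, hpb2⟩ :=
      (extendsAtInfinity_iff_exists_polynomial hb).1 (extendsAtInfinity_iff_neg.1 hB)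
    obtain ⟨pc, hpc, hpc2⟩ := (extendsAtInfinity_iff_exists_polynomial hc).1 hC
    have hpa_deg := (hdeg pa).2 hpa2
    obtain ⟨β, hβ⟩ := (extendsAtInfinity_zero_iff (by fun_prop)).1
      ((exists_extension_sub_mul_iff hpa hpa_deg).1 hD)
    exact ⟨pa, pb, pc, β, hpa, hpa_deg, hpb, hpb2, hpc, hpc2, fun z => by linear_combination hβ z⟩
  · rintro ⟨pa, pb, pc, β, hpa, hpa_deg, hpb, hpb2, hpc, hpc2, hβ⟩
    refine ⟨hA_iff.2 ((extendsAtInfinity_iff_exists_polynomial ha).2 ⟨pa, hpa, (hdeg pa).1 hpa_deg⟩),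
      extendsAtInfinity_iff_neg.2 ((extendsAtInfinity_iff_exists_polynomial hb).2 ⟨pb, hpb, hpb2⟩),
      (extendsAtInfinity_iff_exists_polynomial hc).2 ⟨pc, hpc, hpc2⟩,
      (exists_extension_sub_mul_iff hpa hpa_deg).2 ((extendsAtInfinity_zero_iff (by fun_prop)).2
        ⟨β, fun z => by rw [hβ]; ring⟩)⟩
end

section
/- For k ∈ ℤ, the even holomorphic super vector fields on the split (1|1)-supermanifold over ℙ¹ associated to 𝒪(−k) form a Lie algebra isomorphic to 𝔰𝔩₂(ℂ) ⊕ ℂ, via ((a b; c −a), d) ↦ (−b − 2az + cz²)∂/∂z + ((d − ka) + kcz) θ ∂/∂θ. -/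
noncomputable section

open Polynomial

/-- Superfunctions `p + qθ` on the chart `U₀` of the split `(1|1)`-supermanifold
over `ℙ¹`, with polynomial coefficients. -/
abbrev M13 : Type := Polynomial ℂ × Polynomial ℂ

/-- The even super vector field `(−b−2az+cz²)∂/∂z + (e+kcz)θ∂/∂θ` acting on
superfunctions `p + qθ`. -/
noncomputable def W13 (k : ℤ) (a b c e : ℂ) : M13 → M13 :=
  fun m =>
    ((C (-b) + C (-(2 * a)) * X + C c * X ^ 2) * derivative m.1,
     (C (-b) + C (-(2 * a)) * X + C c * X ^ 2) * derivative m.2 +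
       (C e + C ((k : ℂ) * c) * X) * m.2)

/-- The map `((a b; c −a), d) ↦ (−b−2az+cz²)∂/∂z + ((d−ka)+kcz)θ∂/∂θ`. -/
noncomputable def Φ13 (k : ℤ) (A : Matrix (Fin 2) (Fin 2) ℂ) (d : ℂ) : M13 → M13 :=
  W13 k (A 0 0) (A 0 1) (A 1 0) (d - (k : ℂ) * A 0 0)

/-!
An even vector field `f ∂_z + g θ∂_θ` is determined by its value `(f, g)` on the superfunction
`z + θ`, and two such fields have commutator `(f f'_z − f' f_z) ∂_z + (f g'_z − f' g_z) θ∂_θ`.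
For `f = −b − 2az + cz²` and `g = e + kcz` this is the `𝔰𝔩₂` bracket on `(a, b, c)`, while the
constant `e` drops out under differentiation, which makes the `ℂ` summand central.
-/

section EvenField

variable {R : Type*} [CommRing R]

/-- The even vector field `f ∂/∂z + g θ∂/∂θ` acting on `p + qθ`. -/
def evenField (f g : R[X]) : R[X] × R[X] → R[X] × R[X] :=
  fun m => (f * derivative m.1, f * derivative m.2 + g * m.2)

theorem evenField_X_one (f g : R[X]) : evenField f g (X, 1) = (f, g) := by
  simp [evenField]

theorem evenField_inj {f g f' g' : R[X]} :
    evenField f g = evenField f' g' ↔ f = f' ∧ g = g' := by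
  refine ⟨fun h => ?_, fun ⟨hf, hg⟩ => hf ▸ hg ▸ rfl⟩
  simpa only [evenField_X_one, Prod.mk.injEq] using congrFun h (X, 1)

theorem evenField_add_apply (f g f' g' : R[X]) (m : R[X] × R[X]) :
    evenField (f + f') (g + g') m = evenField f g m + evenField f' g' m := by
  simp only [evenField, Prod.mk_add_mk, Prod.mk.injEq]
  constructor <;> ring

theorem evenField_smul_apply (s : R) (f g : R[X]) (m : R[X] × R[X]) :
    evenField (s • f) (s • g) m = s • evenField f g m := by
  simp only [evenField, Prod.smul_mk, smul_eq_C_mul, Prod.mk.injEq]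
  constructor <;> ring

theorem evenField_commutator (f g f' g' : R[X]) (m : R[X] × R[X]) :
    evenField f g (evenField f' g' m) - evenField f' g' (evenField f g m) =
      evenField (f * derivative f' - f' * derivative f)
        (f * derivative g' - f' * derivative g) m := by
  simp only [evenField, derivative_mul, derivative_add, Prod.mk_sub_mk, Prod.mk.injEq]
  constructor <;> ring

end EvenField

theorem W13_eq_evenField (k : ℤ) (a b c e : ℂ) :
    W13 k a b c e = evenField (C (-b) + C (-(2 * a)) * X + C c * X ^ 2)
      (C e + C ((k : ℂ) * c) * X) :=
  rfl

theorem W13_inj {k : ℤ} {a b c e a' b' c' e' : ℂ}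
    (h : W13 k a b c e = W13 k a' b' c' e') : a = a' ∧ b = b' ∧ c = c' ∧ e = e' := by
  obtain ⟨hf, hg⟩ := evenField_inj.1 h
  exact ⟨by simpa using congrArg (coeff · 1) hf, by simpa using congrArg (coeff · 0) hf,
    by simpa using congrArg (coeff · 2) hf, by simpa using congrArg (coeff · 0) hg⟩

theorem W13_add_apply (k : ℤ) (a b c e a' b' c' e' : ℂ) (m : M13) :
    W13 k (a + a') (b + b') (c + c') (e + e') m = W13 k a b c e m + W13 k a' b' c' e' m := by
  rw [W13_eq_evenField, W13_eq_evenField, W13_eq_evenField, ← evenField_add_apply]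
  congr 1 <;> simp only [map_add, map_neg, map_mul] <;> ring

theorem W13_smul_apply (k : ℤ) (s a b c e : ℂ) (m : M13) :
    W13 k (s * a) (s * b) (s * c) (s * e) m = s • W13 k a b c e m := by
  rw [W13_eq_evenField, W13_eq_evenField, ← evenField_smul_apply]
  congr 1 <;> simp only [smul_eq_C_mul, map_neg, map_mul] <;> ring

theorem W13_commutator (k : ℤ) (a b c e a' b' c' e' : ℂ) (m : M13) :
    W13 k a b c e (W13 k a' b' c' e' m) - W13 k a' b' c' e' (W13 k a b c e m) =
      W13 k (b * c' - b' * c) (2 * (a * b' - a' * b)) (2 * (c * a' - a * c'))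
        (-(k * (b * c' - b' * c))) m := by
  simp only [W13_eq_evenField, evenField_commutator]
  congr 2 <;>
  simp only [derivative_add, derivative_C, derivative_C_mul_X, derivative_C_mul_X_pow] <;>
  simp only [map_sub, map_neg, map_mul, map_ofNat, map_natCast] <;>
  ring

/-- the even holomorphic super vector fields on the split
`(1|1)`-supermanifold over `ℙ¹` associated to `𝒪(−k)` form a Lie algebra
isomorphic to `𝔰𝔩₂(ℂ) ⊕ ℂ` via `Φ13`: the map is injective, linear, has as
image exactly the even vector fields, and carries the bracket of
`𝔰𝔩₂(ℂ) ⊕ ℂ` (with `ℂ` central) to the commutator of vector fields. -/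
theorem stmt_13 (k : ℤ) :
    (∀ (A A' : Matrix (Fin 2) (Fin 2) ℂ) (d d' : ℂ),
      A 1 1 = -(A 0 0) → A' 1 1 = -(A' 0 0) →
      Φ13 k A d = Φ13 k A' d' → A = A' ∧ d = d') ∧
    (∀ (A A' : Matrix (Fin 2) (Fin 2) ℂ) (d d' : ℂ) (m : M13),
      Φ13 k (A + A') (d + d') m = Φ13 k A d m + Φ13 k A' d' m) ∧
    (∀ (s : ℂ) (A : Matrix (Fin 2) (Fin 2) ℂ) (d : ℂ) (m : M13),
      Φ13 k (s • A) (s * d) m = s • Φ13 k A d m) ∧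
    (∀ a b c e : ℂ, ∃ (A : Matrix (Fin 2) (Fin 2) ℂ) (d : ℂ),
      A 1 1 = -(A 0 0) ∧ Φ13 k A d = W13 k a b c e) ∧
    (∀ (A A' : Matrix (Fin 2) (Fin 2) ℂ) (d d' : ℂ),
      A 1 1 = -(A 0 0) → A' 1 1 = -(A' 0 0) →
      ∀ m : M13, Φ13 k (A * A' - A' * A) 0 m =
        Φ13 k A d (Φ13 k A' d' m) - Φ13 k A' d' (Φ13 k A d m)) := by
  refine ⟨?inj, ?add, ?smul, ?surj, ?bracket⟩
  case inj =>
    intro A A' d d' h h' heq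
    obtain ⟨ha, hb, hc, he⟩ := W13_inj heq
    refine ⟨Matrix.ext fun i j => ?_, by linear_combination he + (k : ℂ) * ha⟩
    fin_cases i <;> fin_cases j
    exacts [ha, hb, hc, by simp [h, h', ha]]
  case add =>
    intro A A' d d' m
    rw [Φ13, Φ13, Φ13, ← W13_add_apply]
    simp only [Matrix.add_apply]
    congr 1; ring
  case smul =>
    intro s A d m
    rw [Φ13, Φ13, ← W13_smul_apply]
    simp only [Matrix.smul_apply, smul_eq_mul]
    congr 1; ring
  case surj =>
    intro a b c e
    exact ⟨!![a, b; c, -a], e + k * a, by simp, by simp [Φ13]⟩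
  case bracket =>
    intro A A' d d' h h' m
    simp only [Φ13, W13_commutator]
    congr 1 <;> simp only [Matrix.sub_apply, Matrix.mul_apply, Fin.sum_univ_two, h, h'] <;> ring
end
end

section
/- Let a₀, a₁ : ℂ → ℂ be entire and A₀, A₁ : ℂ → M₂(ℂ) entire matrix-valued functions, satisfying for all w ∈ ℂ*: A₁(w) = A₀(1/w) and a₁(w) = (1/w)((det A₀(1/w) − 1) − (1/w) a₀(1/w)). Then A₀ = A₁ is a constant matrix, det A₀ = 1, and a₀ = a₁ = 0. -/
/-! Liouville's theorem applied on the two charts of `ℙ¹`: an entire function that agrees on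
`ℂ ∖ {0}` with another entire function composed with `z ↦ z⁻¹` is bounded, hence constant. This makes
`A₀ = A₁` a constant `B`; then `a₁` agrees with the entire `u ↦ u (det B - 1 - u a₀(u))` composed with
inversion, so `a₁ ≡ 0`; finally `a₀(z⁻¹) = (det B - 1) z`, so `a₀` is constant with value
`0` at `z = 0`, which forces `det B = 1`. -/

open Bornology Metric Set

lemma isBounded_range_of_eq_comp_inv {f g : ℂ → ℂ} (hf : Continuous f) (hg : Continuous g)
    (h : ∀ z ≠ 0, f z = g z⁻¹) : IsBounded (range f) := by
  have hball : IsCompact (closedBall (0 : ℂ) 1) := isCompact_closedBall 0 1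
  refine ((hball.image hf).isBounded.union (hball.image hg).isBounded).subset ?_
  rintro _ ⟨z, rfl⟩
  rcases le_or_gt ‖z‖ 1 with hz | hz
  · exact Or.inl ⟨z, by simpa using hz, rfl⟩
  · have hz0 : z ≠ 0 := norm_pos_iff.mp (one_pos.trans hz)
    exact Or.inr ⟨z⁻¹, by simpa using inv_le_one_of_one_le₀ hz.le, (h z hz0).symm⟩

lemma eq_const_of_eq_comp_inv {f g : ℂ → ℂ} (hf : Differentiable ℂ f) (hg : Differentiable ℂ g)
    (h : ∀ z ≠ 0, f z = g z⁻¹) : (∀ z, f z = g 0) ∧ ∀ z, g z = g 0 := by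
  have hg' : ∀ z ≠ 0, g z = f z⁻¹ := fun z hz => by rw [h z⁻¹ (inv_ne_zero hz), inv_inv]
  have hg_const : ∀ z, g z = g 0 := fun z =>
    hg.apply_eq_apply_of_bounded (isBounded_range_of_eq_comp_inv hg.continuous hf.continuous hg') z 0
  refine ⟨fun z => ?_, hg_const⟩
  calc f z = f 1 :=
        hf.apply_eq_apply_of_bounded (isBounded_range_of_eq_comp_inv hf.continuous hg.continuous h) z 1
    _ = g 0 := by rw [h 1 one_ne_zero, inv_one, hg_const]

lemma Matrix.eq_const_of_eq_comp_inv {m n : Type*} {A B : ℂ → Matrix m n ℂ}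
    (hA : ∀ i j, Differentiable ℂ fun z => A z i j) (hB : ∀ i j, Differentiable ℂ fun z => B z i j)
    (h : ∀ z ≠ 0, A z = B z⁻¹) : (∀ z, A z = B 0) ∧ ∀ z, B z = B 0 := by
  have hij i j := _root_.eq_const_of_eq_comp_inv (hA i j) (hB i j) fun z hz => by rw [h z hz]
  exact ⟨fun z => Matrix.ext fun i j => (hij i j).1 z, fun z => Matrix.ext fun i j => (hij i j).2 z⟩

/-- computation of `ker Ψ ≅ SL₂(ℂ)` for the nonsplit
`(1|2)`-supermanifold over `ℙ¹`: if entire `a₀, a₁ : ℂ → ℂ` and entire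
matrix-valued `A₀, A₁ : ℂ → M₂(ℂ)` satisfy, for all `w ≠ 0`,
`A₁(w) = A₀(1/w)` and
`a₁(w) = (1/w)((det A₀(1/w) − 1) − (1/w)a₀(1/w))`, then `A₀ = A₁` is a
constant matrix of determinant `1` and `a₀ = a₁ = 0`. -/
theorem stmt_17 (a₀ a₁ : ℂ → ℂ) (A₀ A₁ : ℂ → Matrix (Fin 2) (Fin 2) ℂ)
    (ha₀ : Differentiable ℂ a₀) (ha₁ : Differentiable ℂ a₁)
    (hA₀ : ∀ i j, Differentiable ℂ fun z => A₀ z i j)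
    (hA₁ : ∀ i j, Differentiable ℂ fun z => A₁ z i j)
    (hA : ∀ w : ℂ, w ≠ 0 → A₁ w = A₀ w⁻¹)
    (ha : ∀ w : ℂ, w ≠ 0 →
      a₁ w = w⁻¹ * (((A₀ w⁻¹).det - 1) - w⁻¹ * a₀ w⁻¹)) :
    (∃ B : Matrix (Fin 2) (Fin 2) ℂ, (∀ w, A₀ w = B) ∧ (∀ w, A₁ w = B) ∧
      B.det = 1) ∧ (∀ w, a₀ w = 0) ∧ (∀ w, a₁ w = 0) := by
  obtain ⟨hA₁_const, hA₀_const⟩ := Matrix.eq_const_of_eq_comp_inv hA₁ hA₀ hA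
  set c := (A₀ 0).det - 1
  have ha' : ∀ w ≠ 0, a₁ w = w⁻¹ * (c - w⁻¹ * a₀ w⁻¹) := fun w hw => by
    rw [ha w hw, hA₀_const]
  have ha₁_zero : ∀ w, a₁ w = 0 := by
    have hk : Differentiable ℂ fun u => u * (c - u * a₀ u) := by fun_prop
    simpa using (eq_const_of_eq_comp_inv ha₁ hk ha').1
  have hc : ∀ w ≠ (0 : ℂ), c * w = a₀ w⁻¹ := fun w hw => by
    have := ha' w hw
    rw [ha₁_zero, eq_comm, mul_eq_zero, sub_eq_zero] at this
    rw [this.resolve_left (inv_ne_zero hw), mul_comm, ← mul_assoc, mul_inv_cancel₀ hw, one_mul]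
  obtain ⟨hc_const, ha₀_const⟩ := eq_const_of_eq_comp_inv (by fun_prop) ha₀ hc
  have ha₀_zero : a₀ 0 = 0 := by simpa using (hc_const 0).symm
  have hc_zero : c = 0 := by simpa [ha₀_zero] using hc_const 1
  exact ⟨⟨A₀ 0, hA₀_const, hA₁_const, sub_eq_zero.mp hc_zero⟩,
    fun w => (ha₀_const w).trans ha₀_zero, ha₁_zero⟩
end
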